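/- If a formal series f ∈ V[[x,y]][x^{-1},y^{-1}] satisfies both (x-y)^N f = (x-y)^N g₁ inside V[[x]][x^{-1}][[y]][y^{-1}] and (x-y)^N f = (x-y)^N g₂ inside V[[y]][y^{-1}][[x]][x^{-1}] for some N, where g₁, g₂ are the respective expansions of a common element of V[[x,y]][x^{-1},y^{-1},(x-y)^{-1}], then applying the expansion maps i_{x,y} and i_{y,x} to (x-y)^{-N}·((x-y)^N f) recovers g₁ and g₂ respectively. -/

import Mathlib

/-!
Along each antidiagonal of the `(x, y)`-plane, `i_{x,y}((x-y)^{-N} ·)` after `(x-y)^N ·` is the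
action of the product of power series `(1 - X)^{-N} (1 - X)^N = 1` on a sequence vanishing far
out (the expansion `i_{x,y}` of `G₀ (x-y)^{-M}` is bounded below in `y`, and `i_{y,x}` in `x`), so it
is the identity there. Applied to `(x-y)^N f = (x-y)^N g₁`, resp. `= (x-y)^N g₂`, this returns
`g₁`, resp. `g₂`.
-/

section

variable {V : Type*} [AddCommGroup V] [Module ℂ V]

/-- A doubly-infinite formal series lies in `V[[x,y]][x^{-1},y^{-1}]`. -/
def MemLaurentXY (f : ℤ → ℤ → V) : Prop :=
  ∃ A B : ℤ, ∀ i j : ℤ, (i < A ∨ j < B) → f i j = 0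

/-- Multiplication of a doubly-infinite formal series by `(x-y)^N`, coefficientwise. -/
noncomputable def mulXYpow (N : ℕ) (f : ℤ → ℤ → V) : ℤ → ℤ → V := fun i j =>
  ∑ k ∈ Finset.range (N + 1),
    ((-1 : ℂ) ^ k * (N.choose k : ℂ)) • f (i - ((N : ℤ) - k)) (j - k)

/-- The expansion map `i_{x,y}` applied to `G·(x-y)^{-N}` for `G ∈ V[[x,y]][x^{-1},y^{-1}]`:
`(x-y)^{-N}` is expanded as `Σ_{n≥0} binom(n+N-1, N-1) x^{-n-N} y^n`. -/
noncomputable def expandXY (N : ℕ) (G : ℤ → ℤ → V) : ℤ → ℤ → V := fun a b =>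
  ∑ᶠ n : ℕ, (((n + N - 1).choose (N - 1) : ℂ)) • G (a + N + n) (b - n)

/-- The expansion map `i_{y,x}` applied to `G·(x-y)^{-N}`:
`(x-y)^{-N}` is expanded as `(-1)^N Σ_{n≥0} binom(n+N-1, N-1) x^n y^{-n-N}`. -/
noncomputable def expandYX (N : ℕ) (G : ℤ → ℤ → V) : ℤ → ℤ → V := fun a b =>
  ∑ᶠ n : ℕ, ((-1 : ℂ) ^ N * ((n + N - 1).choose (N - 1) : ℂ)) • G (a - n) (b + N + n)

open PowerSeries Finset

theorem PowerSeries.coeff_one_sub_X_pow {R : Type*} [CommRing R] (N k : ℕ) :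
    coeff k ((1 - X : R⟦X⟧) ^ N) = (-1) ^ k * N.choose k := by
  rw [sub_eq_neg_add, add_pow, map_sum]
  simp_rw [one_pow, mul_one, neg_pow X, mul_right_comm _ (X ^ _), ← map_one (C (R := R)),
    ← map_neg, ← map_natCast (C (R := R)), ← map_pow, ← map_mul, coeff_C_mul_X_pow]
  simp +contextual [Nat.choose_eq_zero_of_lt]

section ShiftAction

variable {R W : Type*}

theorem PowerSeries.sum_coeff_smul_sum_coeff_smul_add [CommSemiring R] [AddCommMonoid W]
    [Module R W] (P Q : R⟦X⟧) {φ : ℕ → W} {T : ℕ} (hφ : ∀ m, T ≤ m → φ m = 0) :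
    ∑ n ∈ range T, coeff n P • ∑ k ∈ range T, coeff k Q • φ (n + k) =
      ∑ m ∈ range T, coeff m (P * Q) • φ m := by
  let F : ℕ × ℕ → W := fun p => (coeff p.1 P * coeff p.2 Q) • φ (p.1 + p.2)
  have hprod : ∑ n ∈ range T, coeff n P • ∑ k ∈ range T, coeff k Q • φ (n + k) =
      ∑ p ∈ range T ×ˢ range T, F p := by
    simp only [sum_product, smul_sum, smul_smul, F]
  have htrunc : ∑ p ∈ range T ×ˢ range T, F p =
      ∑ p ∈ (range T ×ˢ range T).filter (fun p => p.1 + p.2 < T), F p := by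
    refine (sum_subset (filter_subset _ _) fun p _ hp => ?_).symm
    simp only [mem_filter, not_and_or, not_lt] at hp
    simp [F, hφ _ (by tauto)]
  rw [hprod, htrunc, ← sum_fiberwise_of_maps_to (g := fun p => p.1 + p.2) (t := range T)
    (fun p hp => by simpa using (mem_filter.1 hp).2)]
  refine sum_congr rfl fun m hm => ?_
  have hfib : ((range T ×ˢ range T).filter (fun p => p.1 + p.2 < T)).filter
      (fun p => p.1 + p.2 = m) = antidiagonal m := by
    ext p
    simp only [mem_filter, mem_product, mem_range, HasAntidiagonal.mem_antidiagonal] at hm ⊢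
    omega
  rw [hfib, coeff_mul, sum_smul]
  exact sum_congr rfl fun p hp => by simp only [F, HasAntidiagonal.mem_antidiagonal.1 hp]

theorem PowerSeries.finsum_coeff_smul_finsum_coeff_smul_add [CommSemiring R] [AddCommMonoid W]
    [Module R W] (P Q : R⟦X⟧) {φ : ℕ → W} (hφ : φ.support.Finite) :
    ∑ᶠ n, coeff n P • ∑ᶠ k, coeff k Q • φ (n + k) = ∑ᶠ m, coeff m (P * Q) • φ m := by
  obtain ⟨T, hT⟩ : ∃ T, ∀ m, T ≤ m → φ m = 0 := by
    obtain ⟨T, hT⟩ := hφ.bddAbove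
    exact ⟨T + 1, fun m hm => Function.notMem_support.1 fun h => by have := hT h; omega⟩
  have hsupp : ∀ {ψ : ℕ → W}, (∀ m, T ≤ m → ψ m = 0) → ψ.support ⊆ range T :=
    fun {ψ} h m hm => by simp only [coe_range, Set.mem_Iio]; by_contra! h'; exact hm (h m h')
  rw [finsum_eq_sum_of_support_subset _ (hsupp fun n hn => ?_),
    finsum_eq_sum_of_support_subset _ (hsupp fun m hm => by rw [hT m hm, smul_zero])]
  · rw [← sum_coeff_smul_sum_coeff_smul_add P Q hT]
    refine sum_congr rfl fun n _ => ?_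
    rw [finsum_eq_sum_of_support_subset _ (hsupp fun k hk => by rw [hT _ (by omega), smul_zero])]
  · rw [finsum_eq_zero_of_forall_eq_zero fun k => by rw [hT _ (by omega), smul_zero], smul_zero]

theorem PowerSeries.finsum_coeff_smul_finsum_coeff_smul_add_of_mul_eq_one [CommSemiring R]
    [AddCommMonoid W] [Module R W] {P Q : R⟦X⟧} (hPQ : P * Q = 1) {φ : ℕ → W}
    (hφ : φ.support.Finite) :
    ∑ᶠ n, coeff n P • ∑ᶠ k, coeff k Q • φ (n + k) = φ 0 := by
  rw [finsum_coeff_smul_finsum_coeff_smul_add P Q hφ, hPQ,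
    finsum_eq_single _ 0 fun m hm => by rw [coeff_one, if_neg hm, zero_smul]]
  simp

theorem finsum_choose_smul_sum_alternating_smul [CommRing R] [AddCommGroup W] [Module R W]
    {N : ℕ} (hN : 1 ≤ N) {φ : ℕ → W} (hφ : φ.support.Finite) :
    ∑ᶠ n : ℕ, ((n + N - 1).choose (N - 1) : R) •
      ∑ k ∈ range (N + 1), ((-1 : R) ^ k * N.choose k) • φ (n + k) = φ 0 := by
  have hPQ := mk_add_choose_mul_one_sub_pow_eq_one R (N - 1)
  rw [Nat.sub_add_cancel hN] at hPQ
  rw [← finsum_coeff_smul_finsum_coeff_smul_add_of_mul_eq_one hPQ hφ]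
  refine finsum_congr fun n => ?_
  simp only [coeff_mk, coeff_one_sub_X_pow, show n + N - 1 = N - 1 + n by omega]
  congr 1
  refine (finsum_eq_sum_of_support_subset _ fun k hk => ?_).symm
  by_contra! hkN
  simp_all [Nat.choose_eq_zero_of_lt]

end ShiftAction

theorem mulXYpow_add_sub (N : ℕ) (g : ℤ → ℤ → V) (a b : ℤ) (n : ℕ) :
    mulXYpow N g (a + N + n) (b - n) =
      ∑ k ∈ range (N + 1), ((-1 : ℂ) ^ k * N.choose k) • g (a + ↑(n + k)) (b - ↑(n + k)) := by
  refine sum_congr rfl fun k _ => ?_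
  congr 2 <;> push_cast <;> ring

theorem mulXYpow_sub_add (N : ℕ) (g : ℤ → ℤ → V) (a b : ℤ) (n : ℕ) :
    mulXYpow N g (a - n) (b + N + n) = (-1 : ℂ) ^ N •
      ∑ k ∈ range (N + 1), ((-1 : ℂ) ^ k * N.choose k) • g (a - ↑(n + k)) (b + ↑(n + k)) := by
  rw [smul_sum, ← sum_range_reflect]
  refine sum_congr rfl fun k hk => ?_
  have hkN : k ≤ N := Nat.lt_succ_iff.1 (mem_range.1 hk)
  have hsign : (-1 : ℂ) ^ N * (-1) ^ (N - k) = (-1) ^ k := by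
    rw [← pow_add, show N + (N - k) = 2 * (N - k) + k by omega, pow_add, pow_mul]
    norm_num
  rw [add_tsub_cancel_right, smul_smul, ← mul_assoc, hsign, Nat.choose_symm hkN]
  congr 2 <;> push_cast [Nat.cast_sub hkN] <;> ring

theorem expandXY_eq_zero_of_lt {M : ℕ} {G : ℤ → ℤ → V} {B : ℤ}
    (hG : ∀ i j, j < B → G i j = 0) : ∀ a b, b < B → expandXY M G a b = 0 :=
  fun _ _ hb => finsum_eq_zero_of_forall_eq_zero fun _ => by rw [hG _ _ (by omega), smul_zero]

theorem expandYX_eq_zero_of_lt {M : ℕ} {G : ℤ → ℤ → V} {A : ℤ}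
    (hG : ∀ i j, i < A → G i j = 0) : ∀ a b, a < A → expandYX M G a b = 0 :=
  fun _ _ ha => finsum_eq_zero_of_forall_eq_zero fun _ => by rw [hG _ _ (by omega), smul_zero]

theorem expandXY_mulXYpow {N : ℕ} (hN : 1 ≤ N) {g : ℤ → ℤ → V} {B : ℤ}
    (hg : ∀ i j, j < B → g i j = 0) (a b : ℤ) : expandXY N (mulXYpow N g) a b = g a b := by
  have hφ : (fun m : ℕ => g (a + m) (b - m)).support.Finite :=
    (Set.finite_Iio (b - B + 1).toNat).subset fun m hm => by
      by_contra h
      exact hm (hg _ _ (by rw [Set.mem_Iio, not_lt, Int.toNat_le] at h; omega))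
  unfold expandXY
  simp_rw [mulXYpow_add_sub]
  exact (finsum_choose_smul_sum_alternating_smul hN hφ).trans (by simp)

theorem expandYX_mulXYpow {N : ℕ} (hN : 1 ≤ N) {g : ℤ → ℤ → V} {A : ℤ}
    (hg : ∀ i j, i < A → g i j = 0) (a b : ℤ) : expandYX N (mulXYpow N g) a b = g a b := by
  have hφ : (fun m : ℕ => g (a - m) (b + m)).support.Finite :=
    (Set.finite_Iio (a - A + 1).toNat).subset fun m hm => by
      by_contra h
      exact hm (hg _ _ (by rw [Set.mem_Iio, not_lt, Int.toNat_le] at h; omega))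
  unfold expandYX
  simp_rw [mulXYpow_sub_add, smul_smul, mul_right_comm _ _ ((-1 : ℂ) ^ N), ← mul_pow,
    neg_one_mul, neg_neg, one_pow, one_mul]
  exact (finsum_choose_smul_sum_alternating_smul hN hφ).trans (by simp)

theorem expansion_recovers_general (N M : ℕ) (hN : 1 ≤ N)
    (f G₀ : ℤ → ℤ → V) (hG : MemLaurentXY G₀)
    (h1 : ∀ i j : ℤ, mulXYpow N f i j = mulXYpow N (expandXY M G₀) i j)
    (h2 : ∀ i j : ℤ, mulXYpow N f i j = mulXYpow N (expandYX M G₀) i j) :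
    (∀ i j : ℤ, expandXY N (mulXYpow N f) i j = expandXY M G₀ i j) ∧
    (∀ i j : ℤ, expandYX N (mulXYpow N f) i j = expandYX M G₀ i j) := by
  obtain ⟨A, B, hG⟩ := hG
  refine ⟨fun i j => ?_, fun i j => ?_⟩
  · rw [funext₂ h1, expandXY_mulXYpow hN (expandXY_eq_zero_of_lt fun i j hj => hG i j (.inr hj))]
  · rw [funext₂ h2, expandYX_mulXYpow hN (expandYX_eq_zero_of_lt fun i j hi => hG i j (.inl hi))]

/-- If a formal series `f ∈ V[[x,y]][x^{-1},y^{-1}]` satisfies both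
`(x-y)^N f = (x-y)^N g₁` inside `V[[x]][x^{-1}][[y]][y^{-1}]` and
`(x-y)^N f = (x-y)^N g₂` inside `V[[y]][y^{-1}][[x]][x^{-1}]`, where
`g₁ = i_{x,y}(G₀·(x-y)^{-M})` and `g₂ = i_{y,x}(G₀·(x-y)^{-M})` are the respective
expansions of a common element `G₀·(x-y)^{-M}` of `V[[x,y]][x^{-1},y^{-1},(x-y)^{-1}]`,
then applying the expansion maps `i_{x,y}` and `i_{y,x}` to `(x-y)^{-N}·((x-y)^N f)`
recovers `g₁` and `g₂` respectively. -/
theorem expansion_recovers (N M : ℕ) (hN : 1 ≤ N) (hM : 1 ≤ M)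
    (f G₀ : ℤ → ℤ → V) (hf : MemLaurentXY f) (hG : MemLaurentXY G₀)
    (h1 : ∀ i j : ℤ, mulXYpow N f i j = mulXYpow N (expandXY M G₀) i j)
    (h2 : ∀ i j : ℤ, mulXYpow N f i j = mulXYpow N (expandYX M G₀) i j) :
    (∀ i j : ℤ, expandXY N (mulXYpow N f) i j = expandXY M G₀ i j) ∧
    (∀ i j : ℤ, expandYX N (mulXYpow N f) i j = expandYX M G₀ i j) :=
  expansion_recovers_general N M hN f G₀ hG h1 h2

end
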